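/- arXiv:2205.05274 — 2 statements merged into one kernel-verified Lean document; each statement's English description precedes it below -/
import Mathlib

section
/- Let G and H be connected finite simple graphs, each with at least 2 vertices. Then γ_{P,c}(G □ H) ≤ min{Z_c(G)·γ_c(H), Z_c(H)·γ_c(G)}. -/
open SimpleGraph

variable {V : Type*} {α β : Type*}

/-- The monitored set `M(S)`: least set containing the closed neighborhood of `S`
and closed under the propagation rule (a monitored vertex all of whose neighbors,
except possibly one, are monitored forces that remaining neighbor). -/
inductive Monitored (G : SimpleGraph V) (S : Set V) : V → Prop
  | mem : ∀ {v}, v ∈ S → Monitored G S v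
  | dom : ∀ {v w}, v ∈ S → G.Adj v w → Monitored G S w
  | prop : ∀ {v w}, Monitored G S v → G.Adj v w →
      (∀ u, G.Adj v u → u ≠ w → Monitored G S u) → Monitored G S w

/-- `S` is a power dominating set of `G`. -/
def IsPDS (G : SimpleGraph V) (S : Set V) : Prop := ∀ v, Monitored G S v

/-- `S` is a connected power dominating set of `G`. -/
def IsCPDS (G : SimpleGraph V) (S : Set V) : Prop :=
  IsPDS G S ∧ (G.induce S).Connected

/-- The connected power domination number `γ_{P,c}(G)`. -/
noncomputable def cpdn (G : SimpleGraph V) : ℕ :=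
  sInf {n | ∃ S : Finset V, S.card = n ∧ IsCPDS G (S : Set V)}

/-- Zero-forcing: least set containing `Z` closed under the color-change rule. -/
inductive Forced (G : SimpleGraph V) (Z : Set V) : V → Prop
  | mem : ∀ {v}, v ∈ Z → Forced G Z v
  | force : ∀ {v w}, Forced G Z v → G.Adj v w →
      (∀ u, G.Adj v u → u ≠ w → Forced G Z u) → Forced G Z w

/-- `Z` is a zero forcing set of `G`. -/
def IsZFS (G : SimpleGraph V) (Z : Set V) : Prop := ∀ v, Forced G Z v

/-- `Z` is a connected zero forcing set of `G`. -/
def IsCZFS (G : SimpleGraph V) (Z : Set V) : Prop :=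
  IsZFS G Z ∧ (G.induce Z).Connected

/-- The connected zero forcing number `Z_c(G)`. -/
noncomputable def czfn (G : SimpleGraph V) : ℕ :=
  sInf {n | ∃ Z : Finset V, Z.card = n ∧ IsCZFS G (Z : Set V)}

/-- `S` is a dominating set of `G`: `N[S] = V(G)`. -/
def IsDomSet (G : SimpleGraph V) (S : Set V) : Prop :=
  ∀ v, ∃ u ∈ S, u = v ∨ G.Adj u v

/-- `S` is a connected dominating set of `G`. -/
def IsCDS (G : SimpleGraph V) (S : Set V) : Prop :=
  IsDomSet G S ∧ (G.induce S).Connected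

/-- The domination number `γ(G)`. -/
noncomputable def domNum (G : SimpleGraph V) : ℕ :=
  sInf {n | ∃ S : Finset V, S.card = n ∧ IsDomSet G (S : Set V)}

/-- The connected domination number `γ_c(G)`. -/
noncomputable def cdomNum (G : SimpleGraph V) : ℕ :=
  sInf {n | ∃ S : Finset V, S.card = n ∧ IsCDS G (S : Set V)}

/-- The lexicographic product `G ∘ H`. -/
def lexProd (G : SimpleGraph α) (H : SimpleGraph β) : SimpleGraph (α × β) where
  Adj x y := G.Adj x.1 y.1 ∨ (x.1 = y.1 ∧ H.Adj x.2 y.2)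
  symm := ⟨by
    rintro ⟨a, b⟩ ⟨c, d⟩ (h | ⟨h1, h2⟩)
    · exact Or.inl h.symm
    · exact Or.inr ⟨h1.symm, h2.symm⟩⟩
  loopless := ⟨by
    rintro ⟨a, b⟩ (h | ⟨-, h⟩)
    · exact G.loopless.irrefl a h
    · exact H.loopless.irrefl b h⟩

/-- The tensor (direct) product `G × H`. -/
def tensorProd (G : SimpleGraph α) (H : SimpleGraph β) : SimpleGraph (α × β) where
  Adj x y := G.Adj x.1 y.1 ∧ H.Adj x.2 y.2
  symm := ⟨fun _ _ ⟨h1, h2⟩ => ⟨h1.symm, h2.symm⟩⟩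
  loopless := ⟨fun x ⟨h1, _⟩ => G.loopless.irrefl x.1 h1⟩

/-- A vertex `v` is universal in `G`. -/
def IsUniversal (G : SimpleGraph V) (v : V) : Prop := ∀ w, w ≠ v → G.Adj v w

/-- The join of a single vertex (`none`) with the graph `G` (on `some` vertices). -/
def coneGraph (G : SimpleGraph α) : SimpleGraph (Option α) where
  Adj x y := match x, y with
    | none, none => False
    | none, some _ => True
    | some _, none => True
    | some a, some b => G.Adj a b
  symm := ⟨by rintro (_ | a) (_ | b) h <;> first | trivial | exact h.symm⟩
  loopless := ⟨by rintro (_ | a) h <;> first | trivial | exact G.loopless.irrefl a h⟩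

/-- The wheel `W_n`: the join of a single vertex with the cycle `C_n`. -/
def wheelGraph (n : ℕ) : SimpleGraph (Option (Fin n)) := coneGraph (cycleGraph n)

/-- The fan `F_n`: the join of a single vertex with the path `P_n`. -/
def fanGraph (n : ℕ) : SimpleGraph (Option (Fin n)) := coneGraph (pathGraph n)

/-! If `Z` is a zero forcing set of `G` and `D` dominates `H`, then `Z × D` power dominates
`G □ H`: the domination step monitors every fibre `{z} × V(H)` with `z ∈ Z`, and afterwards each
zero forcing step `v → w` of `G` can be replayed simultaneously in all `H`-layers, since the
`H`-neighbours of `(v, b)` lie in the already monitored fibre of `v`. Connectivity of `Z × D` is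
inherited from the factors, and the second bound follows by commutativity of `□`. -/

section Product

variable {G : SimpleGraph α} {H : SimpleGraph β}

theorem Forced.monitored_boxProd {Z : Set α} {D : Set β} (hD : IsDomSet H D) {v : α}
    (hv : Forced G Z v) (b : β) : Monitored (G □ H) (Z ×ˢ D) (v, b) := by
  induction hv generalizing b with
  | @mem v hv =>
    obtain ⟨u, hu, rfl | hub⟩ := hD b
    · exact Monitored.mem ⟨hv, hu⟩
    · exact Monitored.dom (v := (v, u)) ⟨hv, hu⟩ (boxProd_adj_right.mpr hub)
  | @force v w _ hvw _ ih ihNbr =>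
    refine Monitored.prop (ih b) (boxProd_adj_left.mpr hvw) ?_
    rintro ⟨c, d⟩ hadj hne
    rcases hadj with ⟨hvc, rfl : b = d⟩ | ⟨-, rfl : v = c⟩
    · exact ihNbr c hvc (fun hcw => hne (by rw [hcw])) b
    · exact ih d

theorem IsZFS.isPDS_boxProd {Z : Set α} {D : Set β} (hZ : IsZFS G Z) (hD : IsDomSet H D) :
    IsPDS (G □ H) (Z ×ˢ D) :=
  fun x => (hZ x.1).monitored_boxProd hD x.2

variable (G H) in
def induceProdIso (s : Set α) (t : Set β) :
    (G □ H).induce (s ×ˢ t) ≃g G.induce s □ H.induce t where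
  toEquiv := Equiv.Set.prod s t
  map_rel_iff' := by
    rintro ⟨⟨a, b⟩, ha, hb⟩ ⟨⟨c, d⟩, hc, hd⟩
    show G.Adj a c ∧ (⟨b, hb⟩ : t) = ⟨d, hd⟩ ∨ H.Adj b d ∧ (⟨a, ha⟩ : s) = ⟨c, hc⟩ ↔
      G.Adj a c ∧ b = d ∨ H.Adj b d ∧ a = c
    simp [Subtype.ext_iff]

theorem SimpleGraph.Connected.induce_prod {s : Set α} {t : Set β} (hs : (G.induce s).Connected)
    (ht : (H.induce t).Connected) : ((G □ H).induce (s ×ˢ t)).Connected :=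
  (induceProdIso G H s t).connected_iff.mpr (hs.boxProd ht)

end Product

section Iso

variable {G : SimpleGraph α} {G' : SimpleGraph β}

theorem Monitored.image (e : G ≃g G') {S : Set α} {v : α} (hv : Monitored G S v) :
    Monitored G' (e '' S) (e v) := by
  induction hv with
  | mem hv => exact Monitored.mem (Set.mem_image_of_mem e hv)
  | dom hv hvw => exact Monitored.dom (Set.mem_image_of_mem e hv) (e.map_adj_iff.mpr hvw)
  | @prop v w _ hvw _ ih ihNbr =>
    refine Monitored.prop ih (e.map_adj_iff.mpr hvw) fun u hvu hne => ?_
    have := ihNbr (e.symm u) (by rwa [← e.map_adj_iff, e.apply_symm_apply])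
      (fun h => hne (by rw [← h, e.apply_symm_apply]))
    rwa [e.apply_symm_apply] at this

theorem IsCPDS.image (e : G ≃g G') {S : Set α} (hS : IsCPDS G S) : IsCPDS G' (e '' S) := by
  refine ⟨fun v => by simpa using (hS.1 (e.symm v)).image e, ?_⟩
  let f : G.induce S →g G'.induce (e '' S) :=
    ⟨fun x => ⟨e x, Set.mem_image_of_mem e x.2⟩, e.map_adj_iff.mpr⟩
  refine hS.2.map f ?_
  rintro ⟨_, x, hx, rfl⟩
  exact ⟨⟨x, hx⟩, rfl⟩

theorem SimpleGraph.Iso.exists_isCPDS_card (e : G ≃g G') {n : ℕ} :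
    (∃ S : Finset α, S.card = n ∧ IsCPDS G S) → ∃ S : Finset β, S.card = n ∧ IsCPDS G' S := by
  rintro ⟨S, rfl, hS⟩
  exact ⟨S.map e.toEquiv.toEmbedding, Finset.card_map _, by simpa using hS.image e⟩

theorem SimpleGraph.Iso.cpdn_eq (e : G ≃g G') : cpdn G = cpdn G' :=
  congrArg sInf (Set.ext fun _ => ⟨e.exists_isCPDS_card, e.symm.exists_isCPDS_card⟩)

end Iso

theorem exists_isCZFS_card_eq_czfn [Fintype α] {G : SimpleGraph α} (hG : G.Connected) :
    ∃ Z : Finset α, Z.card = czfn G ∧ IsCZFS G Z :=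
  Nat.sInf_mem (s := {n | ∃ Z : Finset α, Z.card = n ∧ IsCZFS G Z})
    ⟨_, Finset.univ, rfl, fun _ => Forced.mem (by simp),
    by rw [Finset.coe_univ]; exact (induceUnivIso G).connected_iff.mpr hG⟩

theorem exists_isCDS_card_eq_cdomNum [Fintype α] {G : SimpleGraph α} (hG : G.Connected) :
    ∃ D : Finset α, D.card = cdomNum G ∧ IsCDS G D :=
  Nat.sInf_mem (s := {n | ∃ D : Finset α, D.card = n ∧ IsCDS G D})
    ⟨_, Finset.univ, rfl, fun v => ⟨v, by simp⟩,
    by rw [Finset.coe_univ]; exact (induceUnivIso G).connected_iff.mpr hG⟩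

theorem cpdn_boxProd_le_czfn_mul_cdomNum [Fintype α] [Fintype β] {G : SimpleGraph α}
    {H : SimpleGraph β} (hG : G.Connected) (hH : H.Connected) :
    cpdn (G □ H) ≤ czfn G * cdomNum H := by
  obtain ⟨Z, hZcard, hZ⟩ := exists_isCZFS_card_eq_czfn hG
  obtain ⟨D, hDcard, hD⟩ := exists_isCDS_card_eq_cdomNum hH
  refine Nat.sInf_le ⟨Z ×ˢ D, by rw [Finset.card_product, hZcard, hDcard], ?_⟩
  rw [Finset.coe_product]
  exact ⟨hZ.1.isPDS_boxProd hD.1, hZ.2.induce_prod hD.2⟩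

theorem stmt_4_general {α β : Type*} [Fintype α] [Fintype β]
    (G : SimpleGraph α) (H : SimpleGraph β)
    (hG : G.Connected) (hH : H.Connected) :
    cpdn (G □ H) ≤ min (czfn G * cdomNum H) (czfn H * cdomNum G) :=
  le_min (cpdn_boxProd_le_czfn_mul_cdomNum hG hH)
    ((boxProdComm G H).cpdn_eq ▸ cpdn_boxProd_le_czfn_mul_cdomNum hH hG)

/-- `γ_{P,c}(G □ H) ≤ min{Z_c(G)·γ_c(H), Z_c(H)·γ_c(G)}`. -/
theorem stmt_4 {α β : Type*} [Fintype α] [Fintype β]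
    (G : SimpleGraph α) (H : SimpleGraph β)
    (hG : G.Connected) (hH : H.Connected)
    (hGcard : 2 ≤ Fintype.card α) (hHcard : 2 ≤ Fintype.card β) :
    cpdn (G □ H) ≤ min (czfn G * cdomNum H) (czfn H * cdomNum G) :=
  stmt_4_general G H hG hH
end

section
/- Let G and H be connected finite simple graphs, each non-bipartite and each having at least two universal vertices. Then the connected power domination number of the tensor product satisfies γ_{P,c}(G × H) = 2. -/
open SimpleGraph

variable {V : Type*} {α β : Type*}

/-! Both bounds come from the two universal vertices `u₁, u₂` of `G` and `w₁, w₂` of `H`,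
together with a third vertex, which non-bipartiteness provides.

The adjacent pair `(u₁, w₁), (u₂, w₂)` dominates every vertex except `(u₁, w₂)` and `(u₂, w₁)`,
and each of these is then forced, e.g. `(u₁, w₂)` by `(u₂, t)` for a third vertex `t` of `H`.

A single vertex `(a, b)` is never enough, because some fort avoids its closed neighbourhood:
a fibre `{x} × V(H)` for a non-neighbour `x` of `a`, symmetrically a fibre `V(G) × {y}`, or,
if `a` and `b` are both universal, the cross `({a} × V(H) ∪ V(G) × {b}) \ {(a, b)}`.
Every vertex of either factor has two neighbours, which is what makes these sets forts. -/

def IsFort (G : SimpleGraph V) (F : Set V) : Prop :=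
  ∀ v ∉ F, ∀ w ∈ F, G.Adj v w → ∃ w' ∈ F, w' ≠ w ∧ G.Adj v w'

section Fort

variable {G : SimpleGraph V} {S F : Set V}

theorem IsFort.not_monitored (hF : IsFort G F) (hS : ∀ w ∈ F, w ∉ S ∧ ∀ u ∈ S, ¬ G.Adj u w)
    {w : V} (hw : w ∈ F) : ¬ Monitored G S w := by
  intro hm
  induction hm with
  | mem h => exact (hS _ hw).1 h
  | dom hu hadj => exact (hS _ hw).2 _ hu hadj
  | prop _ hadj _ ihv ihothers =>
    obtain ⟨w', hw', hne, hadj'⟩ := hF _ ihv _ hw hadj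
    exact ihothers w' hadj' hne hw'

theorem IsFort.not_isPDS_singleton (hF : IsFort G F) {p : V} (hp : p ∉ F)
    (hadj : ∀ w ∈ F, ¬ G.Adj p w) {w : V} (hw : w ∈ F) : ¬ IsPDS G {p} := by
  refine fun h => hF.not_monitored (fun w hw => ⟨?_, ?_⟩) hw (h w)
  · rintro rfl
    exact hp hw
  · rintro _ rfl
    exact hadj w hw

end Fort

theorem exists_ne_ne_of_not_colorable_two {G : SimpleGraph V} (h : ¬ G.Colorable 2) (u v : V) :
    ∃ t, t ≠ u ∧ t ≠ v := by
  classical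
  by_contra! hc
  have hcol : ∀ {x y : V}, G.Adj x y → decide (x = u) ≠ decide (y = u) := fun {x y} hxy => by
    have hne := G.ne_of_adj hxy
    by_cases hx : x = u <;> by_cases hy : y = u
    · exact absurd (hx.trans hy.symm) hne
    · simp [hx, hy]
    · simp [hx, hy]
    · exact absurd ((hc x hx).trans (hc y hy).symm) hne
  exact h (by simpa using (Coloring.mk _ hcol).colorable)

theorem exists_adj_ne_of_isUniversal {G : SimpleGraph V} {w₁ w₂ t : V} (hw : w₁ ≠ w₂)
    (hw₁ : _root_.IsUniversal G w₁) (hw₂ : _root_.IsUniversal G w₂) (ht₁ : t ≠ w₁)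
    (ht₂ : t ≠ w₂) (y z : V) : ∃ z', z' ≠ z ∧ G.Adj y z' := by
  obtain ⟨n₁, n₂, hn, h₁, h₂⟩ : ∃ n₁ n₂, n₁ ≠ n₂ ∧ G.Adj y n₁ ∧ G.Adj y n₂ := by
    by_cases hy₁ : y = w₁
    · subst hy₁
      exact ⟨w₂, t, ht₂.symm, hw₁ _ hw.symm, hw₁ _ ht₁⟩
    by_cases hy₂ : y = w₂
    · subst hy₂
      exact ⟨w₁, t, ht₁.symm, hw₂ _ hw, hw₂ _ ht₂⟩
    exact ⟨w₁, w₂, hw, (hw₁ y hy₁).symm, (hw₂ y hy₂).symm⟩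
  by_cases h : n₁ = z
  · exact ⟨n₂, h ▸ hn.symm, h₂⟩
  · exact ⟨n₁, h, h₁⟩

theorem cpdn_eq_two_of_isCPDS_pair {G : SimpleGraph V} {x y : V} (hxy : x ≠ y)
    (hpair : IsCPDS G {x, y}) (hsingle : ∀ v, ¬ IsPDS G {v}) : cpdn G = 2 := by
  classical
  have hmem : 2 ∈ {n | ∃ S : Finset V, S.card = n ∧ IsCPDS G (S : Set V)} :=
    ⟨{x, y}, Finset.card_pair hxy, by simpa using hpair⟩
  refine le_antisymm (Nat.sInf_le hmem) (le_csInf ⟨2, hmem⟩ ?_)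
  rintro n ⟨S, rfl, hPDS, hconn⟩
  by_contra! hlt
  obtain h | h : S.card = 0 ∨ S.card = 1 := by omega
  · obtain ⟨⟨v, hv⟩⟩ := hconn.nonempty
    simp_all
  · obtain ⟨v, rfl⟩ := Finset.card_eq_one.mp h
    exact hsingle v (by simpa using hPDS)

section TensorProd

variable {G : SimpleGraph α} {H : SimpleGraph β}

theorem isFort_fst_fiber (hH : ∀ y z, ∃ z', z' ≠ z ∧ H.Adj y z') (x : α) :
    IsFort (tensorProd G H) {p | p.1 = x} := by
  rintro ⟨a, b⟩ - ⟨x', y⟩ rfl ⟨hax, -⟩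
  obtain ⟨z, hz, hbz⟩ := hH b y
  exact ⟨(x', z), rfl, fun h => hz (congrArg Prod.snd h), hax, hbz⟩

theorem isFort_snd_fiber (hG : ∀ x z, ∃ z', z' ≠ z ∧ G.Adj x z') (y : β) :
    IsFort (tensorProd G H) {p | p.2 = y} := by
  rintro ⟨a, b⟩ - ⟨x, y'⟩ rfl ⟨-, hby⟩
  obtain ⟨z, hz, haz⟩ := hG a x
  exact ⟨(z, y'), rfl, fun h => hz (congrArg Prod.fst h), haz, hby⟩

theorem isFort_cross (hG : ∀ x z, ∃ z', z' ≠ z ∧ G.Adj x z')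
    (hH : ∀ y z, ∃ z', z' ≠ z ∧ H.Adj y z') {a : α} {b : β}
    (ha : _root_.IsUniversal G a) (hb : _root_.IsUniversal H b) :
    IsFort (tensorProd G H) {p | (p.1 = a ∨ p.2 = b) ∧ p ≠ (a, b)} := by
  rintro ⟨x, y⟩ hv ⟨p, q⟩ ⟨hpq, -⟩ ⟨hxp, hyq⟩
  have hx : x ≠ a := by
    rintro rfl
    obtain rfl : y = b := by simpa using hv
    rcases hpq with rfl | rfl
    exacts [G.loopless.irrefl _ hxp, H.loopless.irrefl _ hyq]
  have hy : y ≠ b := by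
    rintro rfl
    exact hv ⟨Or.inr rfl, fun h => hx (congrArg Prod.fst h)⟩
  rcases hpq with rfl | rfl
  · obtain ⟨z, hz, hxz⟩ := hG x p
    exact ⟨(z, b), ⟨Or.inr rfl, fun h => hz (congrArg Prod.fst h)⟩,
      fun h => hz (congrArg Prod.fst h), hxz, (hb y hy).symm⟩
  · obtain ⟨z, hz, hyz⟩ := hH y q
    exact ⟨(a, z), ⟨Or.inl rfl, fun h => hz (congrArg Prod.snd h)⟩,
      fun h => hz (congrArg Prod.snd h), (ha x hx).symm, hyz⟩

theorem not_isPDS_singleton (hG : ∀ x z, ∃ z', z' ≠ z ∧ G.Adj x z')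
    (hH : ∀ y z, ∃ z', z' ≠ z ∧ H.Adj y z') (p : α × β) : ¬ IsPDS (tensorProd G H) {p} := by
  obtain ⟨a, b⟩ := p
  by_cases ha : _root_.IsUniversal G a
  · by_cases hb : _root_.IsUniversal H b
    · obtain ⟨z, hz, -⟩ := hH b b
      refine (isFort_cross hG hH ha hb).not_isPDS_singleton (fun h => h.2 rfl) ?_
        (w := (a, z)) ⟨Or.inl rfl, fun h => hz (congrArg Prod.snd h)⟩
      rintro ⟨x, y⟩ ⟨hxy, -⟩ ⟨hax, hby⟩
      rcases hxy with rfl | rfl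
      exacts [G.loopless.irrefl _ hax, H.loopless.irrefl _ hby]
    · obtain ⟨y, hy, hby⟩ : ∃ y, y ≠ b ∧ ¬ H.Adj b y := by simpa [_root_.IsUniversal] using hb
      exact (isFort_snd_fiber hG y).not_isPDS_singleton hy.symm
        (fun w hw hadj => hby (hw ▸ hadj.2)) (w := (a, y)) rfl
  · obtain ⟨x, hx, hax⟩ : ∃ x, x ≠ a ∧ ¬ G.Adj a x := by simpa [_root_.IsUniversal] using ha
    exact (isFort_fst_fiber hH x).not_isPDS_singleton hx.symm
      (fun w hw hadj => hax (hw ▸ hadj.1)) (w := (x, b)) rfl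

variable {u₁ u₂ : α} {w₁ w₂ : β}

theorem monitored_pair_of_ne (hu : u₁ ≠ u₂) (hu₁ : _root_.IsUniversal G u₁)
    (hu₂ : _root_.IsUniversal G u₂) (hw : w₁ ≠ w₂) (hw₁ : _root_.IsUniversal H w₁)
    (hw₂ : _root_.IsUniversal H w₂) {p : α × β} (h₁ : p ≠ (u₁, w₂)) (h₂ : p ≠ (u₂, w₁)) :
    Monitored (tensorProd G H) {(u₁, w₁), (u₂, w₂)} p := by
  obtain ⟨x, y⟩ := p
  by_cases hx : x = u₁ <;> by_cases hy : y = w₁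
  · exact Monitored.mem (by simp [hx, hy])
  · subst hx
    have hy₂ : y ≠ w₂ := fun h => h₁ (by rw [h])
    exact Monitored.dom (v := (u₂, w₂)) (by simp) ⟨hu₂ _ hu, hw₂ y hy₂⟩
  · subst hy
    have hx₂ : x ≠ u₂ := fun h => h₂ (by rw [h])
    exact Monitored.dom (v := (u₂, w₂)) (by simp) ⟨hu₂ x hx₂, hw₂ _ hw⟩
  · exact Monitored.dom (v := (u₁, w₁)) (by simp) ⟨hu₁ x hx, hw₁ y hy⟩

theorem monitored_pair_corner (hu : u₁ ≠ u₂) (hu₁ : _root_.IsUniversal G u₁)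
    (hu₂ : _root_.IsUniversal G u₂) (hw : w₁ ≠ w₂) (hw₁ : _root_.IsUniversal H w₁)
    (hw₂ : _root_.IsUniversal H w₂) {t : β} (ht₁ : t ≠ w₁) (ht₂ : t ≠ w₂) :
    Monitored (tensorProd G H) {(u₁, w₁), (u₂, w₂)} (u₁, w₂) := by
  have hdom {p : α × β} (h₁ : p ≠ (u₁, w₂)) (h₂ : p ≠ (u₂, w₁)) :=
    monitored_pair_of_ne hu hu₁ hu₂ hw hw₁ hw₂ h₁ h₂
  refine Monitored.prop (v := (u₂, t))
    (hdom (fun h => hu (congrArg Prod.fst h).symm) (fun h => ht₁ (congrArg Prod.snd h)))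
    ⟨hu₂ u₁ hu, (hw₂ t ht₂).symm⟩ ?_
  rintro ⟨x, y⟩ ⟨hx, -⟩ hne
  exact hdom hne (fun h => hx.ne (congrArg Prod.fst h).symm)

theorem isCPDS_pair (hu : u₁ ≠ u₂) (hu₁ : _root_.IsUniversal G u₁)
    (hu₂ : _root_.IsUniversal G u₂) (hw : w₁ ≠ w₂) (hw₁ : _root_.IsUniversal H w₁)
    (hw₂ : _root_.IsUniversal H w₂) {t : β} (ht₁ : t ≠ w₁) (ht₂ : t ≠ w₂) :
    IsCPDS (tensorProd G H) {(u₁, w₁), (u₂, w₂)} := by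
  refine ⟨fun p => ?_, induce_pair_connected_of_adj ⟨hu₁ _ hu.symm, hw₁ _ hw.symm⟩⟩
  by_cases h₁ : p = (u₁, w₂)
  · exact h₁ ▸ monitored_pair_corner hu hu₁ hu₂ hw hw₁ hw₂ ht₁ ht₂
  by_cases h₂ : p = (u₂, w₁)
  · rw [h₂, Set.pair_comm]
    exact monitored_pair_corner hu.symm hu₂ hu₁ hw.symm hw₂ hw₁ ht₂ ht₁
  exact monitored_pair_of_ne hu hu₁ hu₂ hw hw₁ hw₂ h₁ h₂

end TensorProd

theorem stmt_15_general {α β : Type*}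
    (G : SimpleGraph α) (H : SimpleGraph β)
    (hGnb : ¬ G.Colorable 2) (hHnb : ¬ H.Colorable 2)
    (hGuniv : ∃ u v, u ≠ v ∧ _root_.IsUniversal G u ∧ _root_.IsUniversal G v)
    (hHuniv : ∃ u v, u ≠ v ∧ _root_.IsUniversal H u ∧ _root_.IsUniversal H v) :
    cpdn (tensorProd G H) = 2 := by
  obtain ⟨u₁, u₂, hu, hu₁, hu₂⟩ := hGuniv
  obtain ⟨w₁, w₂, hw, hw₁, hw₂⟩ := hHuniv
  obtain ⟨s, hs₁, hs₂⟩ := exists_ne_ne_of_not_colorable_two hGnb u₁ u₂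
  obtain ⟨t, ht₁, ht₂⟩ := exists_ne_ne_of_not_colorable_two hHnb w₁ w₂
  exact cpdn_eq_two_of_isCPDS_pair (fun h => hu (congrArg Prod.fst h))
    (isCPDS_pair hu hu₁ hu₂ hw hw₁ hw₂ ht₁ ht₂)
    (not_isPDS_singleton (exists_adj_ne_of_isUniversal hu hu₁ hu₂ hs₁ hs₂)
      (exists_adj_ne_of_isUniversal hw hw₁ hw₂ ht₁ ht₂))

/-- If `G` and `H` are non-bipartite with at least two universal vertices each,
then `γ_{P,c}(G × H) = 2`. -/
theorem stmt_15 {α β : Type*} [Fintype α] [Fintype β]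
    (G : SimpleGraph α) (H : SimpleGraph β)
    (hG : G.Connected) (hH : H.Connected)
    (hGnb : ¬ G.Colorable 2) (hHnb : ¬ H.Colorable 2)
    (hGuniv : ∃ u v, u ≠ v ∧ _root_.IsUniversal G u ∧ _root_.IsUniversal G v)
    (hHuniv : ∃ u v, u ≠ v ∧ _root_.IsUniversal H u ∧ _root_.IsUniversal H v) :
    cpdn (tensorProd G H) = 2 :=
  stmt_15_general G H hGnb hHnb hGuniv hHuniv
end
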